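/- Let S = (D, loc, Supp) be a structuring of (Σ, Ax, Lem), N a node of D, and P = {N_1, …, N_k} a partitioning of N with every N_i lemma independent and loc⁻¹(N) = dom^N, and let D' be the development graph of the horizontal split of S with respect to N and P. Then Dom_{Roots(D')} = Dom_{Roots(D)}; in particular, if N is a root of D then Dom_D(N) = Dom_{D'}(N_1) ∪ … ∪ Dom_{D'}(N_k). -/

import Mathlib

open Classical

/-! # Development graphs and structurings

Entities come from a fixed type `E`, partitioned into signature symbols, axioms and
lemmas by a kind function `kind : E → EKind`.  A development graph is a finite acyclic
directed graph whose nodes are triples of sets of entities (local signature, local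
axioms, local lemmas) and whose links are global definition links labelled with
signature morphisms `σ : E → E`. -/

/-- The three kinds of entities: signature symbols, axioms and lemmas. -/
inductive EKind : Type
  | sig
  | ax
  | lem
deriving DecidableEq

/-- A development graph node `N = (sig^N, ax^N, lem^N)`. -/
structure DGNode (E : Type*) where
  sig : Set E
  ax : Set E
  lem : Set E

/-- The local domain `dom^N := sig^N ∪ ax^N ∪ lem^N`. -/
def DGNode.localDom {E : Type*} (N : DGNode E) : Set E := N.sig ∪ N.ax ∪ N.lem

/-- A global definition link `src →mor tgt`. -/
structure DGLink (E : Type*) where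
  src : DGNode E
  mor : E → E
  tgt : DGNode E

/-- A development graph: a finite acyclic directed graph of nodes and links. -/
structure DevGraph (E : Type*) where
  nodes : Set (DGNode E)
  links : Set (DGLink E)
  src_mem : ∀ l ∈ links, l.src ∈ nodes
  tgt_mem : ∀ l ∈ links, l.tgt ∈ nodes
  finite_nodes : nodes.Finite
  finite_links : links.Finite
  acyclic : ∀ N, ¬ Relation.TransGen (fun M K => ∃ l ∈ links, l.src = M ∧ l.tgt = K) N N

namespace DevGraph

variable {E : Type*}

/-- `e ∈ Dom_D(N)`: the domain of a node is the union of its local domain with the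
images `σ(Dom_D(M))` over all incoming links `M →σ N`. -/
inductive InDom (D : DevGraph E) : DGNode E → E → Prop
  | loc {N : DGNode E} {e : E} : N ∈ D.nodes → e ∈ N.localDom → InDom D N e
  | link {l : DGLink E} {e : E} : l ∈ D.links → InDom D l.src e → InDom D l.tgt (l.mor e)

/-- `Dom_D(N)`. -/
def Dom (D : DevGraph E) (N : DGNode E) : Set E := {e | D.InDom N e}

/-- `Dom_D`: the union of `Dom_D(N)` over all nodes. -/
def DomAll (D : DevGraph E) : Set E := ⋃ N ∈ D.nodes, D.Dom N

/-- Root nodes: nodes without outgoing links. -/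
def IsRoot (D : DevGraph E) (N : DGNode E) : Prop :=
  N ∈ D.nodes ∧ ∀ l ∈ D.links, l.src ≠ N

/-- `Dom_{Roots(D)}`. -/
def DomRoots (D : DevGraph E) : Set E := {e | ∃ N, D.IsRoot N ∧ e ∈ D.Dom N}

/-- Global reachability `M →*σ N`: either `M = N` and `σ = id`, or there is a link
`M →σ' K` and `K →*σ'' N` with `σ = σ'' ∘ σ'`. -/
inductive Reaches (D : DevGraph E) : DGNode E → (E → E) → DGNode E → Prop
  | refl (N : DGNode E) : Reaches D N id N
  | step {l : DGLink E} {σ'' : E → E} {N : DGNode E} :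
      l ∈ D.links → Reaches D l.tgt σ'' N → Reaches D l.src (σ'' ∘ l.mor) N

/-- `e` is provided in `N` iff `e ∈ Dom_D(N)` and `e ∉ Dom_D(M)` for every link `M →σ N`. -/
def ProvidedIn (D : DevGraph E) (N : DGNode E) (e : E) : Prop :=
  e ∈ D.Dom N ∧ ∀ l ∈ D.links, l.tgt = N → e ∉ D.Dom l.src

/-- `e` is locally provided in `N` iff it is provided in `N` and `e ∈ dom^N`. -/
def LocallyProvidedIn (D : DevGraph E) (N : DGNode E) (e : E) : Prop :=
  D.ProvidedIn N e ∧ e ∈ N.localDom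

/-- `e` is provided by a link `l : M →σ N` iff `e` is provided but not locally provided
in `N` and `σ(e') = e` for some `e' ∈ Dom_D(M)`. -/
def ProvidedByLink (D : DevGraph E) (l : DGLink E) (e : E) : Prop :=
  l ∈ D.links ∧ D.ProvidedIn l.tgt e ∧ ¬ D.LocallyProvidedIn l.tgt e ∧
    ∃ e' ∈ D.Dom l.src, l.mor e' = e

/-- `e` is exclusively provided by `l` iff no other link provides `e`. -/
def ExclusivelyProvidedBy (D : DevGraph E) (l : DGLink E) (e : E) : Prop :=
  D.ProvidedByLink l e ∧ ∀ l' ∈ D.links, D.ProvidedByLink l' e → l' = l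

/-- A location mapping for `D`: surjective, mapping local entities to their node,
and mapping each entity of `Dom_D` to the unique node providing it. -/
structure IsLocationMapping (D : DevGraph E) (loc : E → DGNode E) : Prop where
  surj : ∀ N ∈ D.nodes, ∃ e ∈ D.DomAll, loc e = N
  local_loc : ∀ N ∈ D.nodes, ∀ e ∈ N.localDom, loc e = N
  provided : ∀ e ∈ D.DomAll, D.ProvidedIn (loc e) e
  unique : ∀ e ∈ D.DomAll, ∀ N, D.ProvidedIn N e → N = loc e

end DevGraph

/-- The relation `⊏` induced by a support mapping `Supp` on lemmas `Lem`:
`Φ ⊏ φ` iff `Φ ∈ Supp φ`, or `Φ ∈ Supp ψ` and `ψ ⊏ φ` for some lemma `ψ`. -/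
inductive SuppBelow {E : Type*} (Supp : E → Set E) (Lem : Set E) : E → E → Prop
  | base {Φ φ : E} : φ ∈ Lem → Φ ∈ Supp φ → SuppBelow Supp Lem Φ φ
  | trans {Φ ψ φ : E} : ψ ∈ Lem → Φ ∈ Supp ψ → SuppBelow Supp Lem ψ φ →
      SuppBelow Supp Lem Φ φ

/-- `Supp` is a support mapping for axioms `Ax` and lemmas `Lem`: each lemma is
supported by axioms and lemmas, and the induced relation `⊏` is well-founded. -/
structure IsSupportMapping {E : Type*} (Supp : E → Set E) (Ax Lem : Set E) : Prop where
  subset : ∀ φ ∈ Lem, Supp φ ⊆ Ax ∪ Lem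
  wf : WellFounded (SuppBelow Supp Lem)

section

variable {E : Type*} (kind : E → EKind)

/-- The global axioms of `N` in `D`. -/
def DevGraph.axiomsOf (D : DevGraph E) (N : DGNode E) : Set E :=
  {e | e ∈ D.Dom N ∧ kind e = EKind.ax}

/-- The global lemmas of `N` in `D`. -/
def DevGraph.lemmasOf (D : DevGraph E) (N : DGNode E) : Set E :=
  {e | e ∈ D.Dom N ∧ kind e = EKind.lem}

/-- The lemmas occurring in `D`. -/
def DevGraph.lemmasAll (D : DevGraph E) : Set E :=
  {e | e ∈ D.DomAll ∧ kind e = EKind.lem}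

/-- `Supp` is a support mapping for the development graph `D`: for every node it is a
support mapping for the global axioms and lemmas of that node. -/
def IsSupportMappingFor (Supp : E → Set E) (D : DevGraph E) : Prop :=
  ∀ N ∈ D.nodes, IsSupportMapping Supp (D.axiomsOf kind N) (D.lemmasOf kind N)

/-- `(D, loc, Supp)` is a structuring of `(Sig, Ax, Lem)`. -/
structure IsStructuring (D : DevGraph E) (loc : E → DGNode E) (Supp : E → Set E)
    (Sig Ax Lem : Set E) : Prop where
  supp_for : IsSupportMappingFor kind Supp D
  loc_map : D.IsLocationMapping loc
  roots_sig : {e | e ∈ D.DomRoots ∧ kind e = EKind.sig} = Sig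
  roots_ax : {e | e ∈ D.DomRoots ∧ kind e = EKind.ax} = Ax
  roots_lem : Lem ⊆ {e | e ∈ D.DomRoots ∧ kind e = EKind.lem}
  supp_reach : ∀ φ ∈ D.lemmasAll kind, ∀ ψ ∈ Supp φ,
    ∃ σ : E → E, D.Reaches (loc ψ) σ (loc φ) ∧ σ ψ = ψ

end

/-- `P = {N_1, …, N_k}`, `k > 1`, is a partitioning of `N`: the local signatures,
axioms and lemmas of the (distinct) `N_i` partition those of `N` as disjoint unions,
and each `N_i` has a nonempty local domain. -/
structure IsPartitioning {E : Type*} (N : DGNode E) {k : ℕ} (Ns : Fin k → DGNode E) :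
    Prop where
  one_lt : 1 < k
  inj : Function.Injective Ns
  sig_eq : N.sig = ⋃ i, (Ns i).sig
  ax_eq : N.ax = ⋃ i, (Ns i).ax
  lem_eq : N.lem = ⋃ i, (Ns i).lem
  sig_disj : ∀ i j, i ≠ j → Disjoint (Ns i).sig (Ns j).sig
  ax_disj : ∀ i j, i ≠ j → Disjoint (Ns i).ax (Ns j).ax
  lem_disj : ∀ i j, i ≠ j → Disjoint (Ns i).lem (Ns j).lem
  nonempty : ∀ i, (Ns i).localDom.Nonempty

/-- `Ni` (a part of a partitioning of `N`) is lemma independent: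
`Supp(ψ) ∩ (ax^N ∪ lem^N) ⊆ ax^{Ni} ∪ lem^{Ni}` for every `ψ ∈ lem^{Ni}`. -/
def LemmaIndependent {E : Type*} (Supp : E → Set E) (N Ni : DGNode E) : Prop :=
  ∀ ψ ∈ Ni.lem, Supp ψ ∩ (N.ax ∪ N.lem) ⊆ Ni.ax ∪ Ni.lem

/-- The restriction `σ|S` of a signature morphism to a set `S` (identity outside `S`). -/
noncomputable def restrictMor {E : Type*} (σ : E → E) (S : Set E) : E → E :=
  fun e => if e ∈ S then σ e else e

/-- `(D', loc')` is the horizontal split of `(D, loc)` with respect to the node `N` and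
the partitioning `N_1, …, N_k`: `N` is replaced by `N_1, …, N_k`, incoming links
`M →θ N` are replaced by `M →θ N_i` for all `i`, outgoing links `N →τ M` by
`N_i →τ|Dom_{D'}(N_i) M` for all `i`, all other links are kept, and `loc'(e) = N_i`
if `e ∈ dom^{N_i}` and `loc'(e) = loc(e)` otherwise. -/
structure IsHorizontalSplit {E : Type*} (D D' : DevGraph E) (N : DGNode E) {k : ℕ}
    (Ns : Fin k → DGNode E) (loc loc' : E → DGNode E) : Prop where
  mem : N ∈ D.nodes
  fresh : ∀ i, Ns i ∉ D.nodes \ {N}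
  nodes' : D'.nodes = Set.range Ns ∪ (D.nodes \ {N})
  links' : D'.links =
    {l | (l ∈ D.links ∧ l.src ≠ N ∧ l.tgt ≠ N)
      ∨ (∃ l0 ∈ D.links, l0.tgt = N ∧ ∃ i, l = ⟨l0.src, l0.mor, Ns i⟩)
      ∨ (∃ l0 ∈ D.links, l0.src = N ∧
          ∃ i, l = ⟨Ns i, restrictMor l0.mor (D'.Dom (Ns i)), l0.tgt⟩)}
  loc'_in : ∀ i, ∀ e ∈ (Ns i).localDom, loc' e = Ns i
  loc'_out : ∀ e, (∀ i, e ∉ (Ns i).localDom) → loc' e = loc e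

/-- `(D', loc')` is the vertical split of `(D, loc)` with respect to the node `N` and
the partitioning `{N_1, N_2}`: `N` is replaced by `N_1` and `N_2` joined by the link
`N_1 →id N_2`, incoming links `M →σ N` are replaced by `M →σ N_1`, outgoing links
`N →σ M` by `N_2 →σ M`, all other links are kept, and `loc'(e) = N_2` if `loc(e) = N`
and `e ∈ Dom_{D'}(N_2)`, `loc'(e) = N_1` if `loc(e) = N` and `e ∉ Dom_{D'}(N_2)`, and
`loc'(e) = loc(e)` otherwise. -/
structure IsVerticalSplit {E : Type*} (D D' : DevGraph E) (N N1 N2 : DGNode E)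
    (loc loc' : E → DGNode E) : Prop where
  mem : N ∈ D.nodes
  fresh1 : N1 ∉ D.nodes \ {N}
  fresh2 : N2 ∉ D.nodes \ {N}
  nodes' : D'.nodes = {N1, N2} ∪ (D.nodes \ {N})
  links' : D'.links =
    {l | (l ∈ D.links ∧ l.src ≠ N ∧ l.tgt ≠ N)
      ∨ l = ⟨N1, id, N2⟩
      ∨ (∃ l0 ∈ D.links, l0.tgt = N ∧ l = ⟨l0.src, l0.mor, N1⟩)
      ∨ (∃ l0 ∈ D.links, l0.src = N ∧ l = ⟨N2, l0.mor, l0.tgt⟩)}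
  loc'_N2 : ∀ e, loc e = N → e ∈ D'.Dom N2 → loc' e = N2
  loc'_N1 : ∀ e, loc e = N → e ∉ D'.Dom N2 → loc' e = N1
  loc'_other : ∀ e, loc e ≠ N → loc' e = loc e

/-- `(D', loc', Supp ∪ SuppN)` is the factorization of `(D, loc, Supp)` with respect to
the nodes `M_1, …, M_p` (imported via links `K_i →σ_{i,j} M_j` from `K_1, …, K_n`),
the fresh sets `sigN, axN, lemN`, the morphisms `θ_j` and `σ_i`, and the support
mapping `SuppN`; it includes all side conditions of the factorization rule. -/
structure IsFactorization {E : Type*} (kind : E → EKind) (D D' : DevGraph E)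
    (loc loc' : E → DGNode E) (Supp SuppN : E → Set E)
    {n p : ℕ} (Ks : Fin n → DGNode E) (Ms : Fin p → DGNode E)
    (σij : Fin n → Fin p → E → E)
    (sigN axN lemN : Set E) (θ : Fin p → E → E) (σ : Fin n → E → E)
    (N : DGNode E) (Nj : Fin p → DGNode E) : Prop where
  one_lt : 1 < p
  Ks_mem : ∀ i, Ks i ∈ D.nodes
  Ms_mem : ∀ j, Ms j ∈ D.nodes
  Ms_inj : Function.Injective Ms
  Ms_nonempty : ∀ j, ((Ms j).sig ∪ (Ms j).ax).Nonempty
  links_ij : ∀ i j, (⟨Ks i, σij i j, Ms j⟩ : DGLink E) ∈ D.links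
  fresh : (sigN ∪ axN ∪ lemN) ∩ D.DomAll = ∅
  kind_sig : ∀ e ∈ sigN, kind e = EKind.sig
  kind_ax : ∀ e ∈ axN, kind e = EKind.ax
  kind_lem : ∀ e ∈ lemN, kind e = EKind.lem
  mor_compat : ∀ i j, ∀ e ∈ D.Dom (Ks i), θ j (σ i e) = σij i j e
  mor_fresh : ∀ i j, ∀ e ∈ D.Dom (Ks i), σij i j e = e ∨ σij i j e ∉ D.DomAll
  sig_sub : ∀ j, (Ms j).sig ⊆ θ j '' sigN ∧ θ j '' sigN ⊆ D.Dom (Ms j)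
  ax_sub : ∀ j, (Ms j).ax ⊆ θ j '' axN ∧ θ j '' axN ⊆ D.Dom (Ms j)
  lem_wit : ∀ e ∈ lemN, ∃ l, θ l e ∈ (Ms l).lem
  lem_inj : ∀ e ∈ lemN, ∀ i j, θ i e = θ j e → i = j
  lem_loc : ∀ e ∈ lemN, ∀ j, θ j e ∈ D.DomAll → loc (θ j e) = Ms j
  suppN : IsSupportMapping SuppN (axN ∪ ⋃ i, σ i '' D.Dom (Ks i)) lemN
  N_def : N = ⟨sigN, axN, lemN⟩
  Nj_def : ∀ j, Nj j = ⟨∅, ∅, (Ms j).lem \ θ j '' lemN⟩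
  nodes' : D'.nodes = {N} ∪ Set.range Nj ∪ (D.nodes \ Set.range Ms)
  links' : D'.links =
    {l | (l ∈ D.links ∧ l.src ∉ Set.range Ms ∧ l.tgt ∉ Set.range Ms)
      ∨ (∃ i, l = ⟨Ks i, σ i, N⟩)
      ∨ (∃ j, l = ⟨N, θ j, Nj j⟩)
      ∨ (∃ l0 ∈ D.links, ∃ j, l0.tgt = Ms j ∧
          (∀ i, l0.src ≠ Ks i ∨ l0.mor ≠ σij i j) ∧ l = ⟨l0.src, l0.mor, Nj j⟩)
      ∨ (∃ l0 ∈ D.links, ∃ j, l0.src = Ms j ∧ l = ⟨Nj j, l0.mor, l0.tgt⟩)}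
  loc'_N : ∀ x, x ∈ D'.Dom N → (∀ i, x ∉ D'.Dom (Ks i)) → loc' x = N
  loc'_Nj : ∀ x j, ¬ (x ∈ D'.Dom N ∧ ∀ i, x ∉ D'.Dom (Ks i)) →
      x ∈ D'.Dom (Nj j) → (∀ l ∈ D'.links, l.tgt = Nj j → x ∉ D'.Dom l.src) →
      loc' x = Nj j
  loc'_other : ∀ x, ¬ (x ∈ D'.Dom N ∧ ∀ i, x ∉ D'.Dom (Ks i)) →
      (∀ j, ¬ (x ∈ D'.Dom (Nj j) ∧ ∀ l ∈ D'.links, l.tgt = Nj j → x ∉ D'.Dom l.src)) →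
      loc' x = loc x

/-- The link `l` is removable from the structuring `(D, loc, Supp)`, and
`D' = ⟨N, L \ {l}⟩` is the corresponding reduction. -/
structure IsRemovableLink {E : Type*} (kind : E → EKind) (D D' : DevGraph E)
    (loc : E → DGNode E) (Supp : E → Set E) (l : DGLink E) : Prop where
  mem : l ∈ D.links
  nodes' : D'.nodes = D.nodes
  links' : D'.links = D.links \ {l}
  cond1 : ∀ l' ∈ D.links, ∀ e ∈ D.Dom l'.src, D.ExclusivelyProvidedBy l' (l'.mor e) →
      l'.mor e ∈ D'.Dom l'.tgt ∧ l ≠ l'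
  cond2 : ∀ e ∈ D.DomAll, ∀ M, D.IsRoot M → ∀ σ : E → E, D.Reaches (loc e) σ M →
      ∃ M', D'.IsRoot M' ∧ D'.Reaches (loc e) σ M'
  cond3_supp : ∀ φ ∈ D.lemmasAll kind, Supp φ ⊆ D'.Dom (loc φ)
  cond3_sig : ∀ N' ∈ D.nodes, N'.sig ⊆ D'.Dom N'

/-! Domains transfer along the split by induction on `InDom`, in both directions: a node
`M ≠ N` has the same domain before and after, and `Dom_D(N)` is the union of the
`Dom_{D'}(N_i)`. Since `k > 0`, an entity entering `N` through a link `M →θ N` enters some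
`N_i` through `M →θ N_i`; conversely an entity leaving `N_i` along `τ|Dom_{D'}(N_i)` is moved
by `τ` itself. Roots correspond as well: `N_i` is a root of `D'` iff `N` is a root of `D`,
and any other node keeps its outgoing links up to retargeting `M →θ N` to `M →θ N_i`. -/

theorem DevGraph.src_ne_tgt {E : Type*} {D : DevGraph E} {l : DGLink E}
    (hl : l ∈ D.links) : l.src ≠ l.tgt := fun h =>
  D.acyclic l.src (Relation.TransGen.single ⟨l, hl, rfl, h.symm⟩)

theorem restrictMor_of_mem {E : Type*} {σ : E → E} {S : Set E} {e : E} (he : e ∈ S) :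
    restrictMor σ S e = σ e :=
  if_pos he

theorem IsPartitioning.localDom_eq_iUnion {E : Type*} {N : DGNode E} {k : ℕ}
    {Ns : Fin k → DGNode E} (hP : IsPartitioning N Ns) :
    N.localDom = ⋃ i, (Ns i).localDom := by
  simp only [DGNode.localDom, hP.sig_eq, hP.ax_eq, hP.lem_eq, Set.iUnion_union_distrib]

namespace IsHorizontalSplit

variable {E : Type*} {D D' : DevGraph E} {N : DGNode E} {k : ℕ} {Ns : Fin k → DGNode E}
  {loc loc' : E → DGNode E}

theorem part_mem_nodes (h : IsHorizontalSplit D D' N Ns loc loc') (i : Fin k) :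
    Ns i ∈ D'.nodes := by
  rw [h.nodes']; exact Or.inl ⟨i, rfl⟩

theorem mem_nodes_of_ne (h : IsHorizontalSplit D D' N Ns loc loc') {M : DGNode E}
    (hM : M ∈ D.nodes) (hMN : M ≠ N) : M ∈ D'.nodes := by
  rw [h.nodes']; exact Or.inr ⟨hM, hMN⟩

theorem part_ne_of_mem_nodes (h : IsHorizontalSplit D D' N Ns loc loc') {M : DGNode E}
    (hM : M ∈ D.nodes) (hMN : M ≠ N) (i : Fin k) : Ns i ≠ M := by
  rintro rfl; exact h.fresh i ⟨hM, hMN⟩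

theorem link_mem_of_ne (h : IsHorizontalSplit D D' N Ns loc loc') {l : DGLink E}
    (hl : l ∈ D.links) (hs : l.src ≠ N) (ht : l.tgt ≠ N) : l ∈ D'.links := by
  rw [h.links']; exact Or.inl ⟨hl, hs, ht⟩

theorem link_to_part_mem (h : IsHorizontalSplit D D' N Ns loc loc') {l : DGLink E}
    (hl : l ∈ D.links) (ht : l.tgt = N) (i : Fin k) :
    (⟨l.src, l.mor, Ns i⟩ : DGLink E) ∈ D'.links := by
  rw [h.links']; exact Or.inr (Or.inl ⟨l, hl, ht, i, rfl⟩)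

theorem link_from_part_mem (h : IsHorizontalSplit D D' N Ns loc loc') {l : DGLink E}
    (hl : l ∈ D.links) (hs : l.src = N) (i : Fin k) :
    (⟨Ns i, restrictMor l.mor (D'.Dom (Ns i)), l.tgt⟩ : DGLink E) ∈ D'.links := by
  rw [h.links']; exact Or.inr (Or.inr ⟨l, hl, hs, i, rfl⟩)

theorem split_inDom_of_inDom [NeZero k] (h : IsHorizontalSplit D D' N Ns loc loc')
    (hcover : N.localDom ⊆ ⋃ i, (Ns i).localDom) {M : DGNode E} {e : E}
    (he : D.InDom M e) :
    (M ≠ N → D'.InDom M e) ∧ (M = N → ∃ i, D'.InDom (Ns i) e) := by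
  induction he with
  | @loc M e hM he =>
    refine ⟨fun hMN => .loc (h.mem_nodes_of_ne hM hMN) he, ?_⟩
    rintro rfl
    obtain ⟨i, hi⟩ := Set.mem_iUnion.mp (hcover he)
    exact ⟨i, .loc (h.part_mem_nodes i) hi⟩
  | @link l e hl _ ih =>
    by_cases hs : l.src = N
    · have ht : l.tgt ≠ N := hs ▸ (DevGraph.src_ne_tgt hl).symm
      refine ⟨fun _ => ?_, fun h' => absurd h' ht⟩
      obtain ⟨i, hi⟩ := ih.2 hs
      have hmor : restrictMor l.mor (D'.Dom (Ns i)) e = l.mor e := restrictMor_of_mem hi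
      exact hmor ▸ DevGraph.InDom.link (h.link_from_part_mem hl hs i) hi
    by_cases ht : l.tgt = N
    · exact ⟨fun h' => absurd ht h',
        fun _ => ⟨0, .link (h.link_to_part_mem hl ht 0) (ih.1 hs)⟩⟩
    · exact ⟨fun _ => .link (h.link_mem_of_ne hl hs ht) (ih.1 hs), fun h' => absurd h' ht⟩

theorem inDom_of_split_inDom (h : IsHorizontalSplit D D' N Ns loc loc')
    (hsub : ∀ i, (Ns i).localDom ⊆ N.localDom) {M : DGNode E} {e : E}
    (he : D'.InDom M e) :
    (M ∈ D.nodes → M ≠ N → D.InDom M e) ∧ (∀ i, M = Ns i → D.InDom N e) := by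
  induction he with
  | @loc M e hM he =>
    rw [h.nodes'] at hM
    rcases hM with ⟨i, rfl⟩ | ⟨hM, hMN⟩
    · exact ⟨fun hM hMN => absurd rfl (h.part_ne_of_mem_nodes hM hMN i),
        fun j hj => .loc h.mem (hsub j (hj ▸ he))⟩
    · exact ⟨fun _ _ => .loc hM he,
        fun j hj => absurd hj.symm (h.part_ne_of_mem_nodes hM hMN j)⟩
  | @link l e hl he ih =>
    rw [h.links'] at hl
    rcases hl with ⟨hl, hs, ht⟩ | ⟨l0, hl0, ht0, i, rfl⟩ | ⟨l0, hl0, hs0, i, rfl⟩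
    · exact ⟨fun _ _ => .link hl (ih.1 (D.src_mem l hl) hs),
        fun j hj => absurd hj.symm (h.part_ne_of_mem_nodes (D.tgt_mem l hl) ht j)⟩
    · have hs0 : l0.src ≠ N := ht0 ▸ DevGraph.src_ne_tgt hl0
      have hN : D.InDom N (l0.mor e) := ht0 ▸ .link hl0 (ih.1 (D.src_mem l0 hl0) hs0)
      exact ⟨fun hM hMN => absurd rfl (h.part_ne_of_mem_nodes hM hMN i), fun _ _ => hN⟩
    · have ht0 : l0.tgt ≠ N := hs0 ▸ (DevGraph.src_ne_tgt hl0).symm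
      have hmor : restrictMor l0.mor (D'.Dom (Ns i)) e = l0.mor e := restrictMor_of_mem he
      refine ⟨fun _ _ => ?_,
        fun j hj => absurd hj.symm (h.part_ne_of_mem_nodes (D.tgt_mem l0 hl0) ht0 j)⟩
      show D.InDom l0.tgt (restrictMor l0.mor (D'.Dom (Ns i)) e)
      exact hmor ▸ DevGraph.InDom.link hl0 (hs0 ▸ ih.2 i rfl)

theorem dom_part_subset (h : IsHorizontalSplit D D' N Ns loc loc')
    (hsub : ∀ i, (Ns i).localDom ⊆ N.localDom) (i : Fin k) : D'.Dom (Ns i) ⊆ D.Dom N :=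
  fun _ he => (h.inDom_of_split_inDom hsub he).2 i rfl

theorem dom_eq_iUnion [NeZero k] (h : IsHorizontalSplit D D' N Ns loc loc')
    (hdom : N.localDom = ⋃ i, (Ns i).localDom) : D.Dom N = ⋃ i, D'.Dom (Ns i) := by
  have hsub : ∀ i, (Ns i).localDom ⊆ N.localDom := hdom ▸ Set.subset_iUnion _
  refine subset_antisymm (fun e he => ?_) (Set.iUnion_subset (h.dom_part_subset hsub))
  exact Set.mem_iUnion.mpr ((h.split_inDom_of_inDom hdom.le he).2 rfl)

theorem isRoot_part_iff (h : IsHorizontalSplit D D' N Ns loc loc') (i : Fin k) :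
    D'.IsRoot (Ns i) ↔ D.IsRoot N := by
  refine ⟨fun hroot => ⟨h.mem, fun l hl hs => hroot.2 _ (h.link_from_part_mem hl hs i) rfl⟩,
    fun hroot => ⟨h.part_mem_nodes i, fun l hl hs => ?_⟩⟩
  rw [h.links'] at hl
  rcases hl with ⟨hl, hsN, -⟩ | ⟨l0, hl0, ht0, j, rfl⟩ | ⟨l0, hl0, hs0, j, rfl⟩
  · exact h.part_ne_of_mem_nodes (D.src_mem l hl) hsN i hs.symm
  · exact h.part_ne_of_mem_nodes (D.src_mem l0 hl0) (ht0 ▸ DevGraph.src_ne_tgt hl0) i hs.symm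
  · exact hroot.2 l0 hl0 hs0

theorem isRoot_iff_of_ne [NeZero k] (h : IsHorizontalSplit D D' N Ns loc loc') {M : DGNode E}
    (hM : M ∈ D.nodes) (hMN : M ≠ N) : D'.IsRoot M ↔ D.IsRoot M := by
  refine ⟨fun hroot => ⟨hM, fun l hl hs => ?_⟩,
    fun hroot => ⟨h.mem_nodes_of_ne hM hMN, fun l hl hs => ?_⟩⟩
  · by_cases ht : l.tgt = N
    · exact hroot.2 _ (h.link_to_part_mem hl ht 0) hs
    · exact hroot.2 l (h.link_mem_of_ne hl (hs ▸ hMN) ht) hs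
  · rw [h.links'] at hl
    rcases hl with ⟨hl, -, -⟩ | ⟨l0, hl0, -, j, rfl⟩ | ⟨l0, -, -, j, rfl⟩
    · exact hroot.2 l hl hs
    · exact hroot.2 l0 hl0 hs
    · exact h.part_ne_of_mem_nodes hM hMN j hs

theorem domRoots_eq [NeZero k] (h : IsHorizontalSplit D D' N Ns loc loc')
    (hdom : N.localDom = ⋃ i, (Ns i).localDom) : D'.DomRoots = D.DomRoots := by
  have hsub : ∀ i, (Ns i).localDom ⊆ N.localDom := hdom ▸ Set.subset_iUnion _
  ext e
  constructor
  · rintro ⟨M, hroot, he⟩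
    rcases h.nodes' ▸ hroot.1 with ⟨i, rfl⟩ | ⟨hM, hMN⟩
    · exact ⟨N, (h.isRoot_part_iff i).1 hroot, h.dom_part_subset hsub i he⟩
    · exact ⟨M, (h.isRoot_iff_of_ne hM hMN).1 hroot, (h.inDom_of_split_inDom hsub he).1 hM hMN⟩
  · rintro ⟨M, hroot, he⟩
    by_cases hMN : M = N
    · subst hMN
      obtain ⟨i, hi⟩ := (h.split_inDom_of_inDom hdom.le he).2 rfl
      exact ⟨Ns i, (h.isRoot_part_iff i).2 hroot, hi⟩
    · exact ⟨M, (h.isRoot_iff_of_ne hroot.1 hMN).2 hroot,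
        (h.split_inDom_of_inDom hdom.le he).1 hMN⟩

end IsHorizontalSplit

theorem horizontal_split_dom_roots_general {E : Type*}
    (D D' : DevGraph E) (loc loc' : E → DGNode E)
    (N : DGNode E) {k : ℕ} (Ns : Fin k → DGNode E)
    (hP : IsPartitioning N Ns)
    (hsplit : IsHorizontalSplit D D' N Ns loc loc') :
    D'.DomRoots = D.DomRoots ∧
      (D.IsRoot N → D.Dom N = ⋃ i, D'.Dom (Ns i)) := by
  have : NeZero k := ⟨(zero_lt_one.trans hP.one_lt).ne'⟩
  have hdom := hP.localDom_eq_iUnion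
  exact ⟨hsplit.domRoots_eq hdom, fun _ => hsplit.dom_eq_iUnion hdom⟩

/-- A horizontal split leaves the domain of the root nodes unchanged;
in particular, if `N` is a root of `D`, then `Dom_D(N) = Dom_{D'}(N_1) ∪ … ∪ Dom_{D'}(N_k)`. -/
theorem horizontal_split_dom_roots {E : Type*} (kind : E → EKind)
    (D D' : DevGraph E) (loc loc' : E → DGNode E) (Supp : E → Set E)
    (Sig Ax Lem : Set E) (N : DGNode E) {k : ℕ} (Ns : Fin k → DGNode E)
    (hS : IsStructuring kind D loc Supp Sig Ax Lem)
    (hP : IsPartitioning N Ns)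
    (hLI : ∀ i, LemmaIndependent Supp N (Ns i))
    (hloc : {e | e ∈ D.DomAll ∧ loc e = N} = N.localDom)
    (hsplit : IsHorizontalSplit D D' N Ns loc loc') :
    D'.DomRoots = D.DomRoots ∧
      (D.IsRoot N → D.Dom N = ⋃ i, D'.Dom (Ns i)) :=
  horizontal_split_dom_roots_general D D' loc loc' N Ns hP hsplit
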